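/- Every real assignment (x,z) that satisfies all constraints of the Figure-instance LP (variable bounds x_a ∈ [0,1], z_P ≥ 0, connectivity, edge-buying, capacity, and shortest-path) together with the two strengthening inequalities z_{P1sv} ≥ z_{P1st} and z_{P2sv} ≥ z_{P2st} has objective value Σ_a x_a ≥ 9; more precisely, Σ_a x_a ≥ 9 + (z_{P2sv} − z_{P2st}). -/

import Mathlib

/-!
Figure-instance LP (from the MSPND strengthening proof).

Arcs are indexed by `Fin 14`:
  0 = a1=(s,v), 1 = b1=(s,b), 2 = b2=(b,v)        (thin arcs, capacity 1)
  3 = c1=(v,d), 4 = c2=(d,e), 5 = c3=(e,t),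
  6..13 = t1..t8 (the top arcs)                    (thick arcs, capacity 2)
Every arc has length 1 and one connection, so the arc-activation variable
`y_a` coincides with `x_a ∈ [0,1]`.

Paths are indexed by `Fin 5`:
  0 = P1sv = ⟨a1⟩, 1 = P2sv = ⟨b1,b2⟩,
  2 = P1st = ⟨a1,c1,c2,c3⟩, 3 = P2st = ⟨b1,b2,c1,c2,c3⟩, 4 = P3st = ⟨t1,…,t8⟩.

Demands: T(s,v) = 1, T(s,t) = 2.
-/

/-- The arc set of the path P1sv = ⟨a1⟩. -/
def P1sv : Finset (Fin 14) := {0}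
/-- The arc set of the path P2sv = ⟨b1,b2⟩. -/
def P2sv : Finset (Fin 14) := {1, 2}
/-- The arc set of the path P1st = ⟨a1,c1,c2,c3⟩. -/
def P1st : Finset (Fin 14) := {0, 3, 4, 5}
/-- The arc set of the path P2st = ⟨b1,b2,c1,c2,c3⟩. -/
def P2st : Finset (Fin 14) := {1, 2, 3, 4, 5}
/-- The arc set of the path P3st = ⟨t1,…,t8⟩. -/
def P3st : Finset (Fin 14) := {6, 7, 8, 9, 10, 11, 12, 13}

/-- Arc capacities: 1 on the thin arcs a1, b1, b2; 2 on the eleven thick arcs. -/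
def cap (a : Fin 14) : ℝ := if a.val < 3 then 1 else 2

/-- Feasibility for the LP relaxation of the MSPND ILP on the Figure instance:
variable bounds, connectivity, edge-buying, capacity, and shortest-path
constraints.  `x : Fin 14 → ℝ` are the arc variables and `z : Fin 5 → ℝ` the
path variables (indexed as described above). -/
structure FigureLPFeasible (x : Fin 14 → ℝ) (z : Fin 5 → ℝ) : Prop where
  x_nonneg : ∀ a : Fin 14, 0 ≤ x a
  x_le_one : ∀ a : Fin 14, x a ≤ 1
  z_nonneg : ∀ P : Fin 5, 0 ≤ z P
  /-- connectivity for the terminal pair (s,v) with demand 1 -/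
  conn_sv : 1 ≤ z 0 + z 1
  /-- connectivity for the terminal pair (s,t) with demand 2 -/
  conn_st : 1 ≤ z 2 + z 3 + z 4
  /-- edge-buying constraints: `z_P ≤ x_a` for every arc `a ∈ P` -/
  eb_P1sv : ∀ a ∈ P1sv, z 0 ≤ x a
  eb_P2sv : ∀ a ∈ P2sv, z 1 ≤ x a
  eb_P1st : ∀ a ∈ P1st, z 2 ≤ x a
  eb_P2st : ∀ a ∈ P2st, z 3 ≤ x a
  eb_P3st : ∀ a ∈ P3st, z 4 ≤ x a
  /-- capacity: demand 1 over s-v-paths plus demand 2 over s-t-paths through `a`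
  is at most `cap a * x a` -/
  capacity : ∀ a : Fin 14,
    1 * ((if a ∈ P1sv then z 0 else 0) + (if a ∈ P2sv then z 1 else 0)) +
      2 * ((if a ∈ P1st then z 2 else 0) + (if a ∈ P2st then z 3 else 0) +
        (if a ∈ P3st then z 4 else 0)) ≤ cap a * x a
  /-- shortest-path constraint for P1sv (length 1; strictly longer s-v-path: P2sv) -/
  sp_P1sv : z 1 ≤ 1 - ∑ a ∈ P1sv, x a
  /-- shortest-path constraint for P2sv (length 2; no strictly longer s-v-path) -/
  sp_P2sv : 0 ≤ 2 - ∑ a ∈ P2sv, x a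
  /-- shortest-path constraint for P1st (length 4; strictly longer: P2st, P3st) -/
  sp_P1st : z 3 + z 4 ≤ 4 - ∑ a ∈ P1st, x a
  /-- shortest-path constraint for P2st (length 5; strictly longer: P3st) -/
  sp_P2st : z 4 ≤ 5 - ∑ a ∈ P2st, x a
  /-- shortest-path constraint for P3st (length 8; no strictly longer s-t-path) -/
  sp_P3st : 0 ≤ 8 - ∑ a ∈ P3st, x a

/-- Objective value: total number of active connections, `Σ_a x_a`. -/
def objVal (x : Fin 14 → ℝ) : ℝ := ∑ a : Fin 14, x a

/-! The thin arc a1 cannot carry s-t flow: its capacity and the shortest-path constraint of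
P1sv give `z₀ + 2 z₂ ≤ x₀ ≤ 1 - z₁ ≤ z₀`, so `z₂ ≤ 0`. Adding the capacity constraints of a1
(`x₀ ≥ z₀ + 2 z₂ ≥ 1 - z₁ + 2 z₂`), of b1 and b2 (`z₁ + 2 z₃` each), of c1, c2, c3 (`z₂ + z₃`
each) and the edge-buying constraints of the eight top arcs (`z₄ ≥ 1 - z₂ - z₃` each) gives
`Σ x ≥ 9 + z₁ - z₃ - 3 z₂ ≥ 9 + z₁ - z₃`. -/

/-- The arcs c1, c2, c3: the v-t part shared by P1st and P2st. -/
def Pvt : Finset (Fin 14) := {3, 4, 5}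

lemma objVal_eq_sum_paths (x : Fin 14 → ℝ) :
    objVal x = x 0 + ∑ a ∈ P2sv, x a + ∑ a ∈ Pvt, x a + ∑ a ∈ P3st, x a := by
  simp only [objVal, Fin.sum_univ_succ, Fin.sum_univ_zero, P2sv, Pvt, P3st, Finset.sum_insert,
    Finset.sum_singleton, Finset.mem_insert, Finset.mem_singleton, Fin.reduceEq, or_self,
    not_false_eq_true]
  simp only [Fin.succ_zero_eq_one, Fin.succ_one_eq_two, Fin.reduceSucc]
  ring

lemma card_mul_le_sum_of_le {ι : Type*} (s : Finset ι) (f : ι → ℝ) {c : ℝ}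
    (h : ∀ a ∈ s, c ≤ f a) : s.card * c ≤ ∑ a ∈ s, f a := by
  simpa using s.card_nsmul_le_sum f c h

namespace FigureLPFeasible

variable {x : Fin 14 → ℝ} {z : Fin 5 → ℝ} (h : FigureLPFeasible x z)
include h

lemma capacity_a1 : z 0 + 2 * z 2 ≤ x 0 := by
  simpa [P1sv, P2sv, P1st, P2st, P3st, cap] using h.capacity 0

lemma capacity_P2sv : ∀ a ∈ P2sv, z 1 + 2 * z 3 ≤ x a := by
  simp only [P2sv, Finset.mem_insert, Finset.mem_singleton, forall_eq_or_imp, forall_eq]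
  constructor
  · simpa [P1sv, P2sv, P1st, P2st, P3st, cap] using h.capacity 1
  · simpa [P1sv, P2sv, P1st, P2st, P3st, cap] using h.capacity 2

lemma capacity_Pvt : ∀ a ∈ Pvt, z 2 + z 3 ≤ x a := by
  intro a ha
  have hcap := h.capacity a
  simp only [Pvt, Finset.mem_insert, Finset.mem_singleton] at ha
  rcases ha with rfl | rfl | rfl <;>
    simp [P1sv, P2sv, P1st, P2st, P3st, cap] at hcap <;> linarith

lemma z_P1st_nonpos : z 2 ≤ 0 := by
  have hsp : z 1 ≤ 1 - x 0 := by simpa [P1sv] using h.sp_P1sv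
  linarith [h.capacity_a1, h.conn_sv]

lemma le_objVal : 9 + (z 1 - z 3) ≤ objVal x := by
  have hb := card_mul_le_sum_of_le P2sv x h.capacity_P2sv
  have hc := card_mul_le_sum_of_le Pvt x h.capacity_Pvt
  have ht := card_mul_le_sum_of_le P3st x h.eb_P3st
  rw [show P2sv.card = 2 from rfl] at hb
  rw [show Pvt.card = 3 from rfl] at hc
  rw [show P3st.card = 8 from rfl] at ht
  rw [objVal_eq_sum_paths]
  push_cast at hb hc ht
  linarith [h.capacity_a1, h.z_P1st_nonpos, h.conn_sv, h.conn_st]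

end FigureLPFeasible

theorem strengthened_LP_value_at_least_nine_general (x : Fin 14 → ℝ) (z : Fin 5 → ℝ)
    (hfeas : FigureLPFeasible x z)
    (hstr2 : z 1 ≥ z 3) :
    9 ≤ objVal x ∧ 9 + (z 1 - z 3) ≤ objVal x :=
  ⟨by linarith [hfeas.le_objVal], hfeas.le_objVal⟩

/-- Every feasible point of the Figure-instance LP that additionally satisfies
the two strengthening inequalities `z_{P1sv} ≥ z_{P1st}` and
`z_{P2sv} ≥ z_{P2st}` has objective value at least 9; more precisely,
`Σ_a x_a ≥ 9 + (z_{P2sv} − z_{P2st})`. -/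
theorem strengthened_LP_value_at_least_nine (x : Fin 14 → ℝ) (z : Fin 5 → ℝ)
    (hfeas : FigureLPFeasible x z)
    (hstr1 : z 0 ≥ z 2) (hstr2 : z 1 ≥ z 3) :
    9 ≤ objVal x ∧ 9 + (z 1 - z 3) ≤ objVal x :=
  strengthened_LP_value_at_least_nine_general x z hfeas hstr2
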